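/- Let a < b be coprime positive integers and let ij and km (with i < j and k < m) be two a,b-admissible diagonals of P_{b+1} that form an edge of the obstruction graph OG(a,b). Then j = m. -/

import Mathlib

/-- `S(a,b) = { ⌊ib/a⌋ : i = 1, …, a-1 }`. -/
def Sab (a b : ℕ) : Finset ℕ := (Finset.Icc 1 (a - 1)).image (fun i => i * b / a)

/-- A diagonal of the polygon `P_{b+1}` with boundary points `0, 1, …, b`:
a pair `i < j` with `j - i ≥ 2` and `(i, j) ≠ (0, b)`. -/
def IsDiagonal (b i j : ℕ) : Prop := i + 2 ≤ j ∧ j ≤ b ∧ ¬(i = 0 ∧ j = b)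

/-- A diagonal `ij` is `a,b`-admissible if it separates `j - i - 1` and `b - j + i`
boundary points, both of which lie in `S(a,b)`. -/
def Admissible (a b : ℕ) (d : ℕ × ℕ) : Prop :=
  IsDiagonal b d.1 d.2 ∧ d.2 - d.1 - 1 ∈ Sab a b ∧ b - d.2 + d.1 ∈ Sab a b

/-- Two diagonals `ij` and `km` cross if `i < k < j < m` or `k < i < m < j`. -/
def Crosses (d d' : ℕ × ℕ) : Prop :=
  (d.1 < d'.1 ∧ d'.1 < d.2 ∧ d.2 < d'.2) ∨ (d'.1 < d.1 ∧ d.1 < d'.2 ∧ d'.2 < d.2)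

/-- An `a,b`-Dyck path: a north/east lattice path from `(0,0)` to `(b,a)` staying weakly
above `y = (a/b) x`.  It is encoded by the height `h u` of its unique east step over the
column interval `[u, u+1]`, for `0 ≤ u < b`; we normalize `h u = a` for `u ≥ b`. -/
structure DyckPath (a b : ℕ) where
  h : ℕ → ℕ
  mono : Monotone h
  norm : ∀ x, b ≤ x → h x = a
  above : ∀ x, x < b → a * (x + 1) ≤ b * h x

/-- The lattice point `(x, y)` lies on `D` at the bottom of a north step of `D`. -/
def BottomNorth (a b : ℕ) (D : DyckPath a b) (x y : ℕ) : Prop :=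
  x ≤ b ∧ (if x = 0 then 0 else D.h (x - 1)) ≤ y ∧ y < D.h x

/-- The laser of slope `a/b` fired northeast from the lattice point `(x, y)` of `D` first
hits `D` in the interior of the east step whose right endpoint has `x`-coordinate `k`;
the associated laser diagonal is `d(P) = (x, k)`.  The laser passes strictly below the
right endpoint of every earlier east step and strictly above the one it hits. -/
def IsLaserDiag (a b : ℕ) (D : DyckPath a b) (x y k : ℕ) : Prop :=
  x < k ∧ k ≤ b ∧ b * D.h (k - 1) < b * y + a * (k - x) ∧
    ∀ u, x ≤ u → u + 1 < k → b * y + a * (u + 1 - x) < b * D.h u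

/-- `F(D)`: the set of laser diagonals `d(P)` of the lattice points `P ≠ (0,0)` at the
bottoms of north steps of `D`. -/
def FD (a b : ℕ) (D : DyckPath a b) : Set (ℕ × ℕ) :=
  { d | ∃ y, BottomNorth a b D d.1 y ∧ (d.1, y) ≠ (0, 0) ∧ IsLaserDiag a b D d.1 y d.2 }

/-- A finite abstract simplicial complex on the ground set `E`: a downward closed
collection of finite subsets of `E`. -/
structure AbsCplx (E : Type*) where
  faces : Set (Finset E)
  down : ∀ F ∈ faces, ∀ F' ⊆ F, F' ∈ faces

/-- The rational associahedron `Âss(a,b)`: faces are the sets of pairwise noncrossing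
`a,b`-admissible diagonals. -/
def hatAss (a b : ℕ) : AbsCplx (ℕ × ℕ) where
  faces := { F | (∀ d ∈ F, Admissible a b d) ∧ ∀ d ∈ F, ∀ d' ∈ F, ¬Crosses d d' }
  down := fun F hF F' hsub =>
    ⟨fun d hd => hF.1 d (hsub hd), fun d hd d' hd' => hF.2 d (hsub hd) d' (hsub hd')⟩

/-- The rational associahedron `Ass(a,b)`: faces are the subsets of the sets `F(D)`,
as `D` ranges over `a,b`-Dyck paths. -/
def Ass (a b : ℕ) : AbsCplx (ℕ × ℕ) where
  faces := { F | ∃ D : DyckPath a b, ∀ d ∈ F, d ∈ FD a b D }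
  down := fun F hF F' hsub =>
    let ⟨D, hD⟩ := hF
    ⟨D, fun d hd => hD d (hsub hd)⟩

/-- Two distinct `a,b`-admissible diagonals `d, d'` form an edge of the obstruction graph
`OG(a,b)` exactly when `{d, d'}` is a face of `Âss(a,b)` but not of `Ass(a,b)`. -/
def OGEdge (a b : ℕ) (d d' : ℕ × ℕ) : Prop :=
  d ≠ d' ∧ ({d, d'} : Finset (ℕ × ℕ)) ∈ (hatAss a b).faces ∧
    ({d, d'} : Finset (ℕ × ℕ)) ∉ (Ass a b).faces

/-!
If `j ≠ m`, we exhibit one Dyck path `D` with both diagonals in `F(D)`, so that `{ij, km}` is a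
face of `Ass(a,b)`. Admissibility of `ij` yields `p` with `a(j-i-1) < pb < a(j-i)` (strict on the
left by coprimality): a laser fired from `(i, y)` under a horizontal run at height `y + p` over the
columns `i, …, j-1` then hits the last east step of the run, so its laser diagonal is `ij`.
The path is the lowest Dyck path raised to such runs. Noncrossing diagonals with `j < m` are
either disjoint (`j ≤ k`), and then get one run each, or nested (`k ≤ i`); in the nested case a
single run at height `⌈am/b⌉` over the columns `i, …, m-1` serves both lasers, fired from
`(i, y₁)` and `(k, y₂)`, after a step up to `y₁` at column `k` lets the outer laser pass below
`(i, y₁)`.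
-/

namespace DyckPath

variable {a b : ℕ}

def bottom (hb : 0 < b) : DyckPath a b where
  h u := (a * min (u + 1) b) ⌈/⌉ b
  mono := (gc_mul_ceilDiv hb).monotone_l.comp fun _ _ huv =>
    Nat.mul_le_mul_left a (min_le_min_right b (Nat.succ_le_succ huv))
  norm x hx := by
    rw [min_eq_right (by omega), mul_comm]
    exact smul_ceilDiv hb a
  above x hx := by
    show a * (x + 1) ≤ b * ((a * min (x + 1) b) ⌈/⌉ b)
    rw [min_eq_left (by omega)]
    exact (ceilDiv_le_iff_le_mul hb).1 le_rfl

theorem bottom_h_le_iff (hb : 0 < b) {u c : ℕ} (hu : u < b) :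
    (bottom hb : DyckPath a b).h u ≤ c ↔ a * (u + 1) ≤ b * c := by
  show (a * min (u + 1) b) ⌈/⌉ b ≤ c ↔ _
  rw [min_eq_left (by omega)]
  exact ceilDiv_le_iff_le_mul hb

def raise (D : DyckPath a b) (x c : ℕ) (hc : c ≤ a) : DyckPath a b where
  h u := if x ≤ u then max (D.h u) c else D.h u
  mono u v huv := by
    have := D.mono huv
    dsimp only
    split_ifs <;> omega
  norm u hu := by
    rw [D.norm u hu]
    split_ifs <;> omega
  above u hu := (D.above u hu).trans (Nat.mul_le_mul_left b (by split_ifs <;> omega))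

variable (D : DyckPath a b) {x c : ℕ} (hc : c ≤ a) {u : ℕ}

theorem raise_h_le_iff {y : ℕ} :
    (D.raise x c hc).h u ≤ y ↔ D.h u ≤ y ∧ (x ≤ u → c ≤ y) := by
  show (if x ≤ u then max (D.h u) c else D.h u) ≤ y ↔ _
  split_ifs with hxu <;> simp [hxu]

theorem h_le_raise_h : D.h u ≤ (D.raise x c hc).h u := by
  show _ ≤ if x ≤ u then max (D.h u) c else D.h u
  split_ifs <;> omega

theorem le_raise_h (hu : x ≤ u) : c ≤ (D.raise x c hc).h u := by
  show _ ≤ if x ≤ u then max (D.h u) c else D.h u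
  rw [if_pos hu]
  exact le_max_right _ _

end DyckPath

theorem exists_lt_mul_lt_of_mem_Sab {a b n : ℕ} (hcop : a.Coprime b) (hn : n ∈ Sab a b) :
    ∃ p, a * n < p * b ∧ p * b < a * (n + 1) := by
  obtain ⟨p, hp, rfl⟩ := Finset.mem_image.mp hn
  rw [Finset.mem_Icc] at hp
  have ha : 0 < a := by omega
  have hndvd : ¬a ∣ p * b := fun h => by
    have := Nat.le_of_dvd (by omega) (hcop.dvd_of_dvd_mul_right h)
    omega
  refine ⟨p, lt_of_le_of_ne (Nat.mul_div_le _ _) fun h => hndvd ⟨_, h.symm⟩, ?_⟩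
  exact Nat.lt_mul_div_succ _ ha

theorem mem_FD_of_rise_of_flat {a b : ℕ} (D : DyckPath a b) {i t j y p : ℕ}
    (hit : i ≤ t) (htj : t < j) (hjb : j ≤ b) (hy : 0 < y)
    (hp₁ : a * (j - i - 1) < p * b) (hp₂ : p * b < a * (j - i))
    (hbelow : ∀ u < i, D.h u ≤ y)
    (hrise : ∀ u, i ≤ u → u < t → b * y + a * (t - i) < b * D.h u)
    (hflat : ∀ u, t ≤ u → u < j → D.h u = y + p) : (i, j) ∈ FD a b D := by
  refine ⟨y, ⟨by omega, ?_, ?_⟩, by simp [hy.ne'], by omega, hjb, ?_, ?_⟩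
  · split_ifs
    exacts [Nat.zero_le _, hbelow _ (by omega)]
  · show y < D.h i
    rcases hit.lt_or_eq with hlt | rfl
    · have := hrise i le_rfl hlt
      exact Nat.lt_of_mul_lt_mul_left (a := b) (by omega)
    · rw [hflat i le_rfl htj]
      have : 0 < p := Nat.pos_of_mul_pos_right (b := b) (by omega)
      omega
  · dsimp only
    rw [hflat (j - 1) (by omega) (by omega), mul_add, mul_comm b p]
    omega
  · intro u hiu huj
    dsimp only at hiu huj ⊢
    rcases lt_or_ge u t with hut | htu
    · have := Nat.mul_le_mul_left a (show u + 1 - i ≤ t - i by omega)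
      linarith [hrise u hiu hut]
    · have := Nat.mul_le_mul_left a (show u + 1 - i ≤ j - i - 1 by omega)
      rw [hflat u htu (by omega), mul_add, mul_comm b p]
      omega

section Construction

variable {a b i j k m p q : ℕ}

theorem exists_mem_FD_of_disjoint (hij : i < j) (hjk : j ≤ k) (hkm : k < m) (hmb : m ≤ b)
    (hp₁ : a * (j - i - 1) < p * b) (hp₂ : p * b < a * (j - i))
    (hq₁ : a * (m - k - 1) < q * b) (hq₂ : q * b < a * (m - k)) :
    ∃ D : DyckPath a b, (i, j) ∈ FD a b D ∧ (k, m) ∈ FD a b D := by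
  have hb : 0 < b := by omega
  set c₁ := a * j ⌈/⌉ b
  set c₂ := a * m ⌈/⌉ b
  have hc₁ : a * j ≤ b * c₁ := (ceilDiv_le_iff_le_mul hb).1 le_rfl
  have hc₂ : a * m ≤ b * c₂ := (ceilDiv_le_iff_le_mul hb).1 le_rfl
  have hc₂a : c₂ ≤ a :=
    (ceilDiv_le_iff_le_mul hb).2 (by rw [mul_comm b]; exact Nat.mul_le_mul_left a hmb)
  have hc₁₂ : c₁ ≤ c₂ :=
    (ceilDiv_le_iff_le_mul hb).2 (hc₂.trans' (Nat.mul_le_mul_left a (by omega)))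
  have hj : a * j = a * i + a * (j - i) := by rw [← mul_add, Nat.add_sub_cancel' hij.le]
  have hm : a * m = a * k + a * (m - k) := by rw [← mul_add, Nat.add_sub_cancel' hkm.le]
  have hjk' := Nat.mul_le_mul_left a hjk
  have hpc : p ≤ c₁ :=
    Nat.le_of_mul_le_mul_left (show b * p ≤ b * c₁ by rw [mul_comm b p]; omega) hb
  have hqc : q ≤ c₂ :=
    Nat.le_of_mul_le_mul_left (show b * q ≤ b * c₂ by rw [mul_comm b q]; omega) hb
  have hy₁ : b * (c₁ - p) + p * b = b * c₁ := by
    rw [mul_comm p, ← mul_add, Nat.sub_add_cancel hpc]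
  have hy₂ : b * (c₂ - q) + q * b = b * c₂ := by
    rw [mul_comm q, ← mul_add, Nat.sub_add_cancel hqc]
  set L : DyckPath a b := DyckPath.bottom hb
  set D := (L.raise i c₁ (hc₁₂.trans hc₂a)).raise k c₂ hc₂a
  refine ⟨D, mem_FD_of_rise_of_flat D (y := c₁ - p) le_rfl hij (by omega) ?_ hp₁ hp₂ ?_
      (by intros; omega) ?_,
    mem_FD_of_rise_of_flat D (y := c₂ - q) le_rfl hkm hmb ?_ hq₁ hq₂ ?_
      (by intros; omega) ?_⟩
  · exact Nat.pos_of_mul_pos_left (a := b) (by omega)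
  · intro u hu
    have := Nat.mul_le_mul_left a (show u + 1 ≤ i by omega)
    simp only [D, L, DyckPath.raise_h_le_iff, DyckPath.bottom_h_le_iff hb (show u < b by omega)]
    omega
  · intro u hiu huj
    rw [Nat.sub_add_cancel hpc]
    have := Nat.mul_le_mul_left a (show u + 1 ≤ j by omega)
    refine le_antisymm ?_ ((L.le_raise_h _ hiu).trans (DyckPath.h_le_raise_h _ _))
    simp only [D, L, DyckPath.raise_h_le_iff, DyckPath.bottom_h_le_iff hb (show u < b by omega)]
    omega
  · exact Nat.pos_of_mul_pos_left (a := b) (by omega)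
  · intro u hu
    have := Nat.mul_le_mul_left a (show u + 1 ≤ k by omega)
    simp only [D, L, DyckPath.raise_h_le_iff, DyckPath.bottom_h_le_iff hb (show u < b by omega)]
    refine ⟨⟨by omega, fun _ => (ceilDiv_le_iff_le_mul hb).2 (by omega)⟩, by omega⟩
  · intro u hku hum
    rw [Nat.sub_add_cancel hqc]
    have := Nat.mul_le_mul_left a (show u + 1 ≤ m by omega)
    refine le_antisymm ?_ (DyckPath.le_raise_h _ _ hku)
    simp only [D, L, DyckPath.raise_h_le_iff, DyckPath.bottom_h_le_iff hb (show u < b by omega)]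
    omega

theorem exists_mem_FD_of_nested (hki : k ≤ i) (hij : i < j) (hjm : j < m) (hmb : m ≤ b)
    (hp₁ : a * (j - i - 1) < p * b) (hp₂ : p * b < a * (j - i))
    (hq₁ : a * (m - k - 1) < q * b) (hq₂ : q * b < a * (m - k)) :
    ∃ D : DyckPath a b, (i, j) ∈ FD a b D ∧ (k, m) ∈ FD a b D := by
  have hb : 0 < b := by omega
  set c := a * m ⌈/⌉ b
  have hc : a * m ≤ b * c := (ceilDiv_le_iff_le_mul hb).1 le_rfl
  have hca : c ≤ a :=
    (ceilDiv_le_iff_le_mul hb).2 (by rw [mul_comm b]; exact Nat.mul_le_mul_left a hmb)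
  have hi : a * i = a * k + a * (i - k) := by rw [← mul_add, Nat.add_sub_cancel' hki]
  have hj : a * j = a * i + a * (j - i) := by rw [← mul_add, Nat.add_sub_cancel' hij.le]
  have hm : a * m = a * k + a * (m - k) := by
    rw [← mul_add, Nat.add_sub_cancel' (hki.trans hij.le |>.trans hjm.le)]
  have hm' : a * (m - k) = a * (m - k - 1) + a := by
    rw [← mul_add_one, Nat.sub_add_cancel (by omega)]
  have hjm' : a * j + a ≤ a * m := by rw [← mul_add_one]; exact Nat.mul_le_mul_left a hjm
  have hpc : p ≤ c :=
    Nat.le_of_mul_le_mul_left (show b * p ≤ b * c by rw [mul_comm b p]; omega) hb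
  have hqc : q ≤ c :=
    Nat.le_of_mul_le_mul_left (show b * q ≤ b * c by rw [mul_comm b q]; omega) hb
  have hy₁ : b * (c - p) + p * b = b * c := by
    rw [mul_comm p, ← mul_add, Nat.sub_add_cancel hpc]
  have hy₂ : b * (c - q) + q * b = b * c := by
    rw [mul_comm q, ← mul_add, Nat.sub_add_cancel hqc]
  set L : DyckPath a b := DyckPath.bottom hb
  have hya : c - p ≤ a := by omega
  set D := (L.raise k (c - p) hya).raise i c hca
  have hflat : ∀ u, i ≤ u → u < m → D.h u = c := by
    intro u hiu hum
    have := Nat.mul_le_mul_left a (show u + 1 ≤ m by omega)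
    refine le_antisymm ?_ (DyckPath.le_raise_h _ _ hiu)
    simp only [D, L, DyckPath.raise_h_le_iff, DyckPath.bottom_h_le_iff hb (show u < b by omega)]
    omega
  refine ⟨D, mem_FD_of_rise_of_flat D (y := c - p) le_rfl hij (by omega) ?_ hp₁ hp₂ ?_
      (by intros; omega) ?_,
    mem_FD_of_rise_of_flat D (y := c - q) hki (by omega) hmb ?_ hq₁ hq₂ ?_ ?_ ?_⟩
  · exact Nat.pos_of_mul_pos_left (a := b) (by omega)
  · intro u hu
    have := Nat.mul_le_mul_left a (show u + 1 ≤ i by omega)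
    simp only [D, L, DyckPath.raise_h_le_iff, DyckPath.bottom_h_le_iff hb (show u < b by omega)]
    omega
  · intro u hiu huj
    rw [Nat.sub_add_cancel hpc]
    exact hflat u hiu (by omega)
  · exact Nat.pos_of_mul_pos_left (a := b) (by omega)
  · intro u hu
    have := Nat.mul_le_mul_left a (show u + 1 ≤ k by omega)
    simp only [D, L, DyckPath.raise_h_le_iff, DyckPath.bottom_h_le_iff hb (show u < b by omega)]
    omega
  · intro u hku hui
    have : b * (c - p) ≤ b * D.h u :=
      Nat.mul_le_mul_left b ((L.le_raise_h hya hku).trans (DyckPath.h_le_raise_h _ _))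
    omega
  · intro u hiu hum
    rw [Nat.sub_add_cancel hqc]
    exact hflat u hiu hum

end Construction

theorem exists_mem_FD_of_not_crosses {a b i j k m : ℕ} (hcop : a.Coprime b)
    (h₁ : Admissible a b (i, j)) (h₂ : Admissible a b (k, m)) (hnc : ¬Crosses (i, j) (k, m))
    (hjm : j < m) : ∃ D : DyckPath a b, (i, j) ∈ FD a b D ∧ (k, m) ∈ FD a b D := by
  obtain ⟨⟨hij, hjb, -⟩, hS₁, -⟩ := h₁
  obtain ⟨⟨hkm, hmb, -⟩, hS₂, -⟩ := h₂
  obtain ⟨p, hp₁, hp₂⟩ := exists_lt_mul_lt_of_mem_Sab hcop hS₁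
  obtain ⟨q, hq₁, hq₂⟩ := exists_lt_mul_lt_of_mem_Sab hcop hS₂
  dsimp only at *
  rw [show j - i - 1 + 1 = j - i by omega] at hp₂
  rw [show m - k - 1 + 1 = m - k by omega] at hq₂
  rcases le_or_gt j k with hjk | hkj
  · exact exists_mem_FD_of_disjoint (by omega) hjk (by omega) hmb hp₁ hp₂ hq₁ hq₂
  · have hki : k ≤ i := by unfold Crosses at hnc; omega
    exact exists_mem_FD_of_nested hki (by omega) hjm hmb hp₁ hp₂ hq₁ hq₂

theorem OGEdge_same_larger_endpoint_general (a b i j k m : ℕ)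
    (hcop : Nat.Coprime a b)
    (h1 : Admissible a b (i, j)) (h2 : Admissible a b (k, m))
    (he : OGEdge a b (i, j) (k, m)) : j = m := by
  obtain ⟨-, ⟨-, hnc⟩, hnot⟩ := he
  by_contra hjm
  obtain ⟨D, hD⟩ : ∃ D : DyckPath a b, (i, j) ∈ FD a b D ∧ (k, m) ∈ FD a b D := by
    rcases Nat.lt_or_gt_of_ne hjm with hlt | hgt
    · exact exists_mem_FD_of_not_crosses hcop h1 h2 (hnc _ (by simp) _ (by simp)) hlt
    · obtain ⟨D, hkm, hij⟩ :=
        exists_mem_FD_of_not_crosses hcop h2 h1 (hnc _ (by simp) _ (by simp)) hgt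
      exact ⟨D, hij, hkm⟩
  exact hnot ⟨D, by simpa using hD⟩

/-- If the `a,b`-admissible diagonals `ij` and `km` form an edge of the obstruction
graph `OG(a,b)`, then `j = m`. -/
theorem OGEdge_same_larger_endpoint (a b i j k m : ℕ) (ha : 0 < a) (hab : a < b)
    (hcop : Nat.Coprime a b) (hij : i < j) (hkm : k < m)
    (h1 : Admissible a b (i, j)) (h2 : Admissible a b (k, m))
    (he : OGEdge a b (i, j) (k, m)) : j = m :=
  OGEdge_same_larger_endpoint_general a b i j k m hcop h1 h2 he
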